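/- Let H, K be complex Hilbert spaces, (X,μ) and (Y,ν) measure spaces, ρ: Y → X a measurable bijection with ν∘ρ⁻¹ = μ, T: H → K a bounded linear bijection with bounded inverse, and τ: Y → ℂ measurable with |τ(y)| = 1 for all y. Given weakly measurable, essentially norm-bounded Ψ, Φ: X → H, define Ψ̃(y) := τ(y)·T(Ψ(ρ(y))) and Φ̃(y) := τ(y)·T(Φ(ρ(y))). If (Ψ,Φ) is a reproducing pair with resolution operator S_{Ψ,Φ}, then T·S_{Ψ,Φ}·T* is a resolution operator for (Ψ̃,Φ̃), i.e., ⟨T S_{Ψ,Φ} T* f, g⟩_K = ∫_Y ⟨f,Ψ̃(y)⟩·⟨Φ̃(y),g⟩ dν(y) for all f,g ∈ K. -/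

import Mathlib

open MeasureTheory
open scoped ComplexConjugate

noncomputable section

/-- `Ψ : X → H` is weakly measurable: `x ↦ ⟨f, Ψ x⟩` is a measurable function for
every `f ∈ H`.  Here `⟨·,·⟩` denotes the inner product in the paper's convention
(linear in the first argument), i.e. `⟨f, Ψ x⟩ = inner (Ψ x) f` in Mathlib's
convention. -/
def WeaklyMeasurable {X : Type*} [MeasurableSpace X] {H : Type*} [NormedAddCommGroup H]
    [InnerProductSpace ℂ H] (Ψ : X → H) : Prop :=
  ∀ f : H, Measurable fun x => (inner ℂ (Ψ x) f : ℂ)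

/-- `Ψ : X → H` is essentially norm-bounded with respect to `μ`. -/
def EssNormBounded {X : Type*} [MeasurableSpace X] (μ : Measure X) {H : Type*}
    [NormedAddCommGroup H] (Ψ : X → H) : Prop :=
  ∃ C : ℝ, ∀ᵐ x ∂μ, ‖Ψ x‖ ≤ C

/-- `S` is a resolution operator for the pair `(Ψ, Φ)`:
`⟨S f, g⟩ = ∫_X ⟨f, Ψ x⟩ · ⟨Φ x, g⟩ dμ(x)` for all `f, g ∈ H`, where `⟨·,·⟩` is the
paper's inner product (linear in the first argument), i.e. `⟨u, v⟩ = inner v u` in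
Mathlib's convention. -/
def IsResolutionOperator {X : Type*} [MeasurableSpace X] (μ : Measure X) {H : Type*}
    [NormedAddCommGroup H] [InnerProductSpace ℂ H] (Ψ Φ : X → H) (S : H →L[ℂ] H) : Prop :=
  ∀ f g : H, (inner ℂ g (S f) : ℂ) = ∫ x, (inner ℂ (Ψ x) f : ℂ) * (inner ℂ g (Φ x) : ℂ) ∂μ

/-- `(Ψ, Φ)` is a reproducing pair for `H` with respect to `(X, μ)`:  the resolution
operator is a bounded linear operator on `H` with bounded inverse. -/
def IsReproducingPair {X : Type*} [MeasurableSpace X] (μ : Measure X) {H : Type*}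
    [NormedAddCommGroup H] [InnerProductSpace ℂ H] (Ψ Φ : X → H) : Prop :=
  ∃ S : H ≃L[ℂ] H, IsResolutionOperator μ Ψ Φ (S : H →L[ℂ] H)

/-!
The resolution identity `⟨S f, g⟩ = ∫ ⟨f, Ψ x⟩ ⟨Φ x, g⟩ dμ` survives each of the three
operations that produce `(Ψ̃, Φ̃)` from `(Ψ, Φ)`: reparametrizing by a measure-preserving `ρ` is a
change of variables; multiplying both maps by the same unimodular phase `τ` multiplies the
integrand by `|τ|² = 1`; and applying `T` replaces `S` by `T S T*`, since `⟨f, T Ψ x⟩ = ⟨T* f, Ψ x⟩`.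
-/

section

variable {X Y H K : Type*} [MeasurableSpace X] [MeasurableSpace Y]
  [NormedAddCommGroup H] [InnerProductSpace ℂ H] [NormedAddCommGroup K] [InnerProductSpace ℂ K]

theorem WeaklyMeasurable.measurable_inner_left {Φ : X → H} (hΦ : WeaklyMeasurable Φ) (g : H) :
    Measurable fun x => (inner ℂ g (Φ x) : ℂ) := by
  simpa only [Function.comp_def, inner_conj_symm] using
    Complex.continuous_conj.measurable.comp (hΦ g)

theorem IsResolutionOperator.comp_measurePreserving {μ : Measure X} {ν : Measure Y}
    {Ψ Φ : X → H} {S : H →L[ℂ] H} (hS : IsResolutionOperator μ Ψ Φ S)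
    (hΨ : WeaklyMeasurable Ψ) (hΦ : WeaklyMeasurable Φ) {ρ : Y → X}
    (hρ : MeasurePreserving ρ ν μ) :
    IsResolutionOperator ν (fun y => Ψ (ρ y)) (fun y => Φ (ρ y)) S := by
  intro f g
  have hmeas : Measurable fun x => (inner ℂ (Ψ x) f : ℂ) * (inner ℂ g (Φ x) : ℂ) :=
    (hΨ f).mul (hΦ.measurable_inner_left g)
  rw [hS f g, ← hρ.map_eq, integral_map hρ.measurable.aemeasurable hmeas.aestronglyMeasurable]

theorem IsResolutionOperator.unimodular_smul {μ : Measure X} {Ψ Φ : X → H} {S : H →L[ℂ] H}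
    (hS : IsResolutionOperator μ Ψ Φ S) {τ : X → ℂ} (hτ : ∀ x, ‖τ x‖ = 1) :
    IsResolutionOperator μ (fun x => τ x • Ψ x) (fun x => τ x • Φ x) S := by
  intro f g
  have hτ_conj (x : X) : conj (τ x) * τ x = 1 := by
    rw [Complex.conj_mul', hτ x, Complex.ofReal_one, one_pow]
  refine (hS f g).trans (integral_congr_ae (Filter.Eventually.of_forall fun x => ?_))
  simp only [inner_smul_left, inner_smul_right]
  linear_combination (-(inner ℂ (Ψ x) f * inner ℂ g (Φ x))) * hτ_conj x

theorem IsResolutionOperator.map [CompleteSpace H] [CompleteSpace K] {μ : Measure X}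
    {Ψ Φ : X → H} {S : H →L[ℂ] H} (hS : IsResolutionOperator μ Ψ Φ S) (T : H →L[ℂ] K) :
    IsResolutionOperator μ (fun x => T (Ψ x)) (fun x => T (Φ x))
      (T.comp (S.comp (ContinuousLinearMap.adjoint T))) := by
  intro f g
  calc inner ℂ g (T (S (T.adjoint f)))
      = inner ℂ (T.adjoint g) (S (T.adjoint f)) := (T.adjoint_inner_left _ _).symm
    _ = ∫ x, inner ℂ (Ψ x) (T.adjoint f) * inner ℂ (T.adjoint g) (Φ x) ∂μ := hS _ _
    _ = ∫ x, inner ℂ (T (Ψ x)) f * inner ℂ g (T (Φ x)) ∂μ := by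
      simp only [T.adjoint_inner_left, T.adjoint_inner_right]

end

theorem resolutionOperator_equiv_general
    {H K : Type*} [NormedAddCommGroup H] [InnerProductSpace ℂ H] [CompleteSpace H]
    [NormedAddCommGroup K] [InnerProductSpace ℂ K] [CompleteSpace K]
    {X Y : Type*} [MeasurableSpace X] [MeasurableSpace Y]
    (μ : Measure X) (ν : Measure Y)
    (ρ : Y → X) (hρmeas : Measurable ρ)
    (hρμ : ν.map ρ = μ)
    (T : H ≃L[ℂ] K)
    (τ : Y → ℂ) (hτ : ∀ y, ‖τ y‖ = 1)
    (Ψ Φ : X → H)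
    (hΨw : WeaklyMeasurable Ψ) (hΦw : WeaklyMeasurable Φ)
    (S : H ≃L[ℂ] H) (hS : IsResolutionOperator μ Ψ Φ (S : H →L[ℂ] H)) :
    IsResolutionOperator ν (fun y => τ y • T (Ψ (ρ y))) (fun y => τ y • T (Φ (ρ y)))
      ((T : H →L[ℂ] K).comp ((S : H →L[ℂ] H).comp
        (ContinuousLinearMap.adjoint (T : H →L[ℂ] K)))) :=
  ((hS.comp_measurePreserving hΨw hΦw ⟨hρmeas, hρμ⟩).map (T : H →L[ℂ] K)).unimodular_smul hτ

/-- If `(Ψ, Φ)` is a reproducing pair with resolution operator `S`,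
then `T ∘ S ∘ T*` is a resolution operator for the transformed pair
`Ψ̃ y = τ y • T (Ψ (ρ y))`, `Φ̃ y = τ y • T (Φ (ρ y))`. -/
theorem resolutionOperator_equiv
    {H K : Type*} [NormedAddCommGroup H] [InnerProductSpace ℂ H] [CompleteSpace H]
    [NormedAddCommGroup K] [InnerProductSpace ℂ K] [CompleteSpace K]
    {X Y : Type*} [MeasurableSpace X] [MeasurableSpace Y]
    (μ : Measure X) (ν : Measure Y)
    (ρ : Y → X) (hρmeas : Measurable ρ) (hρbij : Function.Bijective ρ)
    (hρμ : ν.map ρ = μ)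
    (T : H ≃L[ℂ] K)
    (τ : Y → ℂ) (hτmeas : Measurable τ) (hτ : ∀ y, ‖τ y‖ = 1)
    (Ψ Φ : X → H)
    (hΨw : WeaklyMeasurable Ψ) (hΦw : WeaklyMeasurable Φ)
    (hΨb : EssNormBounded μ Ψ) (hΦb : EssNormBounded μ Φ)
    (S : H ≃L[ℂ] H) (hS : IsResolutionOperator μ Ψ Φ (S : H →L[ℂ] H)) :
    IsResolutionOperator ν (fun y => τ y • T (Ψ (ρ y))) (fun y => τ y • T (Φ (ρ y)))
      ((T : H →L[ℂ] K).comp ((S : H →L[ℂ] H).comp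
        (ContinuousLinearMap.adjoint (T : H →L[ℂ] K)))) :=
  resolutionOperator_equiv_general μ ν ρ hρmeas hρμ T τ hτ Ψ Φ hΨw hΦw S hS
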